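/- Let μ be a reconciliation map from (T;t,σ) to S with T binary, and let u be an interior vertex with children v, w. If μ(v) and μ(w) are comparable in S, or if μ(u) ≻_S lca_S(μ(v), μ(w)), then u is a duplication vertex (t(u)=□). -/
import Mathlib


/-- A rooted tree on vertex type `V`, encoded by a parent map.
Edges are directed away from the root; the edge into a non-root vertex `v`
is `(par v, v)`. -/
structure RTree (V : Type*) where
  root : V
  par : V → V
  par_root : par root = root
  par_ne : ∀ v, v ≠ root → par v ≠ v
  reaches : ∀ v, ∃ k, par^[k] v = root

namespace RTree

variable {V : Type*}

/-- `anc T x y` : `x` is a descendant of `y`, i.e. `x ⪯_T y`. -/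
def anc (T : RTree V) (x y : V) : Prop := ∃ k, (T.par)^[k] x = y

/-- strict descendant: `x ≺_T y`. -/
def sanc (T : RTree V) (x y : V) : Prop := T.anc x y ∧ x ≠ y

def IsLeaf (T : RTree V) (v : V) : Prop := ∀ u, T.par u = v → u = v

/-- `x` is a least common ancestor of the set `A`. -/
def IsLca (T : RTree V) (A : Set V) (x : V) : Prop :=
  (∀ a ∈ A, T.anc a x) ∧ ∀ y, (∀ a ∈ A, T.anc a y) → T.anc x y

/-- A time map: strict descendants have strictly larger time stamps. -/
def IsTimeMap (T : RTree V) (τ : V → ℝ) : Prop :=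
  ∀ x y, T.sanc x y → τ y < τ x

end RTree

/-- Event labels: speciation `•`, duplication `□`, HGT `△`, leaf `⊙`. -/
inductive Event where
  | spec | dup | hgt | leaf
deriving DecidableEq

/-- The common setup: a gene tree `T` (vertices `V`) with event labels `t`,
transfer edges `trans` (an edge is recorded by its child endpoint),
a species tree `S` (vertices `W`), the map `sig = σ` assigning to each gene
(leaf of `T`) the species (leaf of `S`) it resides in, and a least common
ancestor function `lca` on the species tree. -/
structure ReconSetup (V W : Type*) where
  T : RTree V
  S : RTree W
  t : V → Event
  trans : Set V
  sig : V → W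
  lca : Set W → W
  trans_ne_root : ∀ v ∈ trans, v ≠ T.root
  trans_hgt : ∀ v ∈ trans, t (T.par v) = Event.hgt
  leaf_iff : ∀ v, T.IsLeaf v ↔ t v = Event.leaf
  sig_leaf : ∀ v, T.IsLeaf v → S.IsLeaf (sig v)
  lca_spec : ∀ A : Set W, A.Nonempty → S.IsLca A (lca A)

/-- lower endpoint of a vertex-or-edge of the species tree
(an edge `(S.par y, y)` is encoded as `Sum.inr y`; a vertex `x` as `Sum.inl x`). -/
def lowPt {W : Type*} : W ⊕ W → W := Sum.elim id id

namespace ReconSetup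

variable {V W : Type*}

/-- ancestor order of the forest `T_{E̅}` obtained by deleting transfer edges. -/
def fanc (R : ReconSetup V W) (x y : V) : Prop :=
  ∃ k, (R.T.par)^[k] x = y ∧ ∀ i < k, (R.T.par)^[i] x ∉ R.trans

def sfanc (R : ReconSetup V W) (x y : V) : Prop := R.fanc x y ∧ x ≠ y

/-- `σ_{T̅}(u)`: the species of the leaves of `T` below `u` in the forest `T_{E̅}`. -/
def sigmaBar (R : ReconSetup V W) (u : V) : Set W :=
  R.sig '' {l | R.T.IsLeaf l ∧ R.fanc l u}

/-- Ancestor order of `S` extended to vertices and edges: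
`z ⪯ (x,y) ↔ z ⪯ y`, `(x,y) ⪯ z ↔ x ⪯ z`, `(x,y) ⪯ (a,b) ↔ y ⪯ b`. -/
def extLE (R : ReconSetup V W) : W ⊕ W → W ⊕ W → Prop
  | Sum.inl a, Sum.inl b => R.S.anc a b
  | Sum.inl a, Sum.inr y => R.S.anc a y
  | Sum.inr y, Sum.inl b => R.S.anc (R.S.par y) b
  | Sum.inr y, Sum.inr z => R.S.anc y z

def extLT (R : ReconSetup V W) (p q : W ⊕ W) : Prop := R.extLE p q ∧ ¬ R.extLE q p

def incomp (R : ReconSetup V W) (p q : W ⊕ W) : Prop := ¬ R.extLE p q ∧ ¬ R.extLE q p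

def IsDupHGT (R : ReconSetup V W) (u : V) : Prop :=
  R.t u = Event.dup ∨ R.t u = Event.hgt

/-- (M1) leaf constraint. -/
def M1 (R : ReconSetup V W) (μ : V → W ⊕ W) : Prop :=
  ∀ u, R.T.IsLeaf u → μ u = Sum.inl (R.sig u)

/-- (M2i) speciation vertices map to the lca of the species below them. -/
def M2i (R : ReconSetup V W) (μ : V → W ⊕ W) : Prop :=
  ∀ u, R.t u = Event.spec → μ u = Sum.inl (R.lca (R.sigmaBar u))

/-- (M2ii) duplication/HGT vertices map to edges of `S`. -/
def M2ii (R : ReconSetup V W) (μ : V → W ⊕ W) : Prop :=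
  ∀ u, R.IsDupHGT u → ∃ y, y ≠ R.S.root ∧ μ u = Sum.inr y

/-- (M2iii) the endpoints of a transfer edge receive incomparable images. -/
def M2iii (R : ReconSetup V W) (μ : V → W ⊕ W) : Prop :=
  ∀ v ∈ R.trans, R.incomp (μ (R.T.par v)) (μ v)

/-- (M3) ancestor constraint within components of `T_{E̅}`. -/
def M3 (R : ReconSetup V W) (μ : V → W ⊕ W) : Prop :=
  ∀ v w, R.sfanc v w →
    ((R.IsDupHGT v ∧ R.IsDupHGT w) → R.extLE (μ v) (μ w)) ∧
    (¬ (R.IsDupHGT v ∧ R.IsDupHGT w) → R.extLT (μ v) (μ w))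

/-- `μ` is a reconciliation map from `(T;t,σ)` to `S`. -/
def IsRecon (R : ReconSetup V W) (μ : V → W ⊕ W) : Prop :=
  R.M1 μ ∧ R.M2i μ ∧ R.M2ii μ ∧ R.M2iii μ ∧ R.M3 μ

/-- (O1) every internal vertex has at least two children. -/
def O1 (R : ReconSetup V W) : Prop :=
  ∀ v, ¬ R.T.IsLeaf v →
    ∃ a b, a ≠ b ∧ R.T.par a = v ∧ R.T.par b = v ∧ a ≠ v ∧ b ≠ v

/-- (O2) every HGT vertex has a transfer child edge and a non-transfer child edge. -/
def O2 (R : ReconSetup V W) : Prop :=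
  ∀ v, R.t v = Event.hgt →
    (∃ c, R.T.par c = v ∧ c ∈ R.trans) ∧ (∃ c, R.T.par c = v ∧ c ≠ v ∧ c ∉ R.trans)

/-- (Σ1) a speciation vertex has two children whose species sets are disjoint. -/
def Sigma1 (R : ReconSetup V W) : Prop :=
  ∀ x, R.t x = Event.spec →
    ∃ v w, v ≠ w ∧ R.T.par v = x ∧ R.T.par w = x ∧ v ≠ x ∧ w ≠ x ∧
      R.sigmaBar v ∩ R.sigmaBar w = ∅

/-- (Σ2) the species sets across a transfer edge are disjoint. -/
def Sigma2 (R : ReconSetup V W) : Prop :=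
  ∀ w ∈ R.trans, R.sigmaBar (R.T.par w) ∩ R.sigmaBar w = ∅

/-- the gene tree is binary. -/
def BinaryT (R : ReconSetup V W) : Prop :=
  ∀ v, ¬ R.T.IsLeaf v →
    ∃ a b, a ≠ b ∧ ∀ c, (R.T.par c = v ∧ c ≠ v) ↔ (c = a ∨ c = b)

/-- the species tree is binary. -/
def BinaryS (R : ReconSetup V W) : Prop :=
  ∀ v, ¬ R.S.IsLeaf v →
    ∃ a b, a ≠ b ∧ ∀ c, (R.S.par c = v ∧ c ≠ v) ↔ (c = a ∨ c = b)

/-- (C1) speciation vertices and leaves get the same time as their image. -/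
def C1 (R : ReconSetup V W) (μ : V → W ⊕ W) (τT : V → ℝ) (τS : W → ℝ) : Prop :=
  ∀ u x, (R.t u = Event.spec ∨ R.t u = Event.leaf) → μ u = Sum.inl x → τT u = τS x

/-- (C2) a vertex mapped into an edge `(x,y)` gets a time strictly between
the times of `x` and `y`. -/
def C2 (R : ReconSetup V W) (μ : V → W ⊕ W) (τT : V → ℝ) (τS : W → ℝ) : Prop :=
  ∀ u y, R.IsDupHGT u → μ u = Sum.inr y → τS (R.S.par y) < τT u ∧ τT u < τS y

/-- `μ` is a time-consistent reconciliation map. -/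
def TimeConsistent (R : ReconSetup V W) (μ : V → W ⊕ W) : Prop :=
  ∃ τT τS, R.T.IsTimeMap τT ∧ R.S.IsTimeMap τS ∧ R.C1 μ τT τS ∧ R.C2 μ τT τS

/-- (D1). -/
def D1 (R : ReconSetup V W) (μ : V → W ⊕ W) (τT : V → ℝ) (τS : W → ℝ) : Prop :=
  ∀ u x, μ u = Sum.inl x → τT u = τS x

/-- (D2). -/
def D2 (R : ReconSetup V W) (τT : V → ℝ) (τS : W → ℝ) : Prop :=
  ∀ u x, R.IsDupHGT u → R.S.anc x (R.lca (R.sigmaBar u)) → τT u < τS x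

/-- (D3), for a transfer edge `(T.par v, v)` with `v ∈ trans`. -/
def D3 (R : ReconSetup V W) (τT : V → ℝ) (τS : W → ℝ) : Prop :=
  ∀ v x, v ∈ R.trans →
    R.S.anc (R.lca (R.sigmaBar (R.T.par v) ∪ R.sigmaBar v)) x → τS x < τT (R.T.par v)

/-- The DTL-scenario axioms (I)-(IV) for a map `γ : V(T) → V(S)`. -/
def DTL (R : ReconSetup V W) (γ : V → W) : Prop :=
  (∀ u, R.T.IsLeaf u → γ u = R.sig u) ∧
  (∀ u v w, v ≠ w → R.T.par v = u → R.T.par w = u → v ≠ u → w ≠ u →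
    ((¬ R.S.sanc (γ u) (γ v) ∧ ¬ R.S.sanc (γ u) (γ w)) ∧
     (R.S.anc (γ v) (γ u) ∨ R.S.anc (γ w) (γ u)))) ∧
  (∀ v, v ≠ R.T.root →
    (v ∈ R.trans ↔ (¬ R.S.anc (γ (R.T.par v)) (γ v) ∧ ¬ R.S.anc (γ v) (γ (R.T.par v))))) ∧
  (∀ u v w, v ≠ w → R.T.par v = u → R.T.par w = u → v ≠ u → w ≠ u →
    ((R.t u = Event.hgt ↔ (v ∈ R.trans ∨ w ∈ R.trans)) ∧
     (R.t u = Event.spec →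
       γ u = R.lca {γ v, γ w} ∧ ¬ R.S.anc (γ v) (γ w) ∧ ¬ R.S.anc (γ w) (γ v)) ∧
     (R.t u = Event.dup → R.S.anc (R.lca {γ v, γ w}) (γ u))))

end ReconSetup

/-- A directed graph (relation) is acyclic: no edge closes a directed cycle. -/
def Acyclic {α : Type*} (r : α → α → Prop) : Prop :=
  ∀ x y, r x y → ¬ Relation.ReflTransGen r y x

section AuxLemmas

variable {V W : Type*}

namespace RTree

lemma anc_refl (T : RTree V) (x : V) : T.anc x x := ⟨0, rfl⟩

lemma anc_trans {T : RTree V} {x y z : V} (h1 : T.anc x y) (h2 : T.anc y z) :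
    T.anc x z := by
  obtain ⟨k, hk⟩ := h1; obtain ⟨m, hm⟩ := h2
  exact ⟨m + k, by rw [Function.iterate_add_apply, hk, hm]⟩

lemma anc_par (T : RTree V) (x : V) : T.anc x (T.par x) := ⟨1, rfl⟩

lemma anc_total {T : RTree V} {x p q : V} (hp : T.anc x p) (hq : T.anc x q) :
    T.anc p q ∨ T.anc q p := by
  obtain ⟨i, hi⟩ := hp; obtain ⟨j, hj⟩ := hq
  rcases le_total i j with hle | hle
  · left
    refine ⟨j - i, ?_⟩
    rw [← hi, ← Function.iterate_add_apply, Nat.sub_add_cancel hle, hj]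
  · right
    refine ⟨i - j, ?_⟩
    rw [← hj, ← Function.iterate_add_apply, Nat.sub_add_cancel hle, hi]

open Classical in
noncomputable def depth (T : RTree V) (v : V) : ℕ := Nat.find (T.reaches v)

open Classical in
lemma depth_spec (T : RTree V) (v : V) : T.par^[T.depth v] v = T.root :=
  Nat.find_spec (T.reaches v)

open Classical in
lemma depth_min (T : RTree V) (v : V) {m : ℕ} (h : m < T.depth v) :
    T.par^[m] v ≠ T.root := Nat.find_min (T.reaches v) h

lemma depth_child {T : RTree V} {c x : V} (hpc : T.par c = x) (hcx : c ≠ x) :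
    T.depth c = T.depth x + 1 := by
  have hcr : c ≠ T.root := by
    intro hh; subst hh; exact hcx (by rw [← hpc, T.par_root])
  classical
  rw [depth, Nat.find_eq_iff]
  constructor
  · rw [Function.iterate_succ_apply, hpc]; exact T.depth_spec x
  · intro m hm
    match m with
    | 0 => exact hcr
    | n + 1 =>
      rw [Function.iterate_succ_apply, hpc]
      exact T.depth_min x (by omega)

lemma depth_lt_card [Fintype V] (T : RTree V) (v : V) :
    T.depth v < Fintype.card V := by
  have key : ∀ i j : ℕ, i < j → j ≤ T.depth v → T.par^[i] v ≠ T.par^[j] v := by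
    intro i j hij hj he
    have hroot : T.par^[T.depth v - j + i] v = T.root := by
      calc T.par^[T.depth v - j + i] v = T.par^[T.depth v - j] (T.par^[i] v) := by
            rw [← Function.iterate_add_apply]
        _ = T.par^[T.depth v - j] (T.par^[j] v) := by rw [he]
        _ = T.par^[T.depth v] v := by rw [← Function.iterate_add_apply, Nat.sub_add_cancel hj]
        _ = T.root := T.depth_spec v
    exact T.depth_min v (by omega) hroot
  have hinj : Function.Injective (fun i : Fin (T.depth v + 1) => T.par^[(i : ℕ)] v) := by
    intro i j hij
    by_contra hne
    have h1 : (i : ℕ) ≠ (j : ℕ) := fun hh => hne (Fin.ext hh)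
    rcases lt_or_gt_of_ne h1 with hlt | hlt
    · exact key i j hlt (by omega) hij
    · exact key j i hlt (by omega) hij.symm
  have hc := Fintype.card_le_of_injective _ hinj
  simp only [Fintype.card_fin] at hc
  omega

end RTree

namespace ReconSetup

variable (R : ReconSetup V W)

lemma sfanc_child {c x : V} (hpc : R.T.par c = x) (hcx : c ≠ x) (hct : c ∉ R.trans) :
    R.sfanc c x := by
  refine ⟨⟨1, by simpa using hpc, ?_⟩, hcx⟩
  intro i hi
  rw [Nat.lt_one_iff] at hi
  subst hi
  exact hct

lemma exists_nt_child (hO1 : R.O1) (hO2 : R.O2) {x : V} (hx : ¬ R.T.IsLeaf x) :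
    ∃ c, R.T.par c = x ∧ c ≠ x ∧ c ∉ R.trans := by
  by_cases ht : R.t x = Event.hgt
  · obtain ⟨_, c, hc1, hc2, hc3⟩ := hO2 x ht
    exact ⟨c, hc1, hc2, hc3⟩
  · obtain ⟨a, b, hab, ha, hb, hax, hbx⟩ := hO1 x hx
    refine ⟨a, ha, hax, fun htr => ?_⟩
    have hh := R.trans_hgt a htr
    rw [ha] at hh
    exact ht hh

lemma sigmaBar_subset {c x : V} (hct : c ∉ R.trans) (hpc : R.T.par c = x) :
    R.sigmaBar c ⊆ R.sigmaBar x := by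
  rintro a ⟨l, ⟨hl, k, hk, hpre⟩, rfl⟩
  refine ⟨l, ⟨hl, k + 1, ?_, ?_⟩, rfl⟩
  · rw [Function.iterate_succ_apply', hk, hpc]
  · intro i hi
    rcases Nat.lt_succ_iff_lt_or_eq.1 hi with hh | rfl
    · exact hpre i hh
    · rw [hk]; exact hct

lemma sigmaBar_nonempty [Fintype V] (hO1 : R.O1) (hO2 : R.O2) (x : V) :
    (R.sigmaBar x).Nonempty := by
  suffices H : ∀ n x, Fintype.card V - R.T.depth x ≤ n → (R.sigmaBar x).Nonempty by
    exact H _ x le_rfl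
  intro n
  induction n with
  | zero =>
    intro x hx
    exfalso
    have := R.T.depth_lt_card x
    omega
  | succ n ih =>
    intro x hx
    by_cases hleaf : R.T.IsLeaf x
    · exact ⟨R.sig x, ⟨x, ⟨hleaf, 0, rfl, fun i hi => absurd hi (Nat.not_lt_zero i)⟩, rfl⟩⟩
    · obtain ⟨c, hc1, hc2, hc3⟩ := R.exists_nt_child hO1 hO2 hleaf
      have hd : R.T.depth c = R.T.depth x + 1 := RTree.depth_child hc1 hc2
      have hle : Fintype.card V - R.T.depth c ≤ n := by
        have := R.T.depth_lt_card x; omega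
      obtain ⟨a, ha⟩ := ih c hle
      exact ⟨a, R.sigmaBar_subset hc3 hc1 ha⟩

lemma extLE_lowPt {p q : W ⊕ W} (h : R.extLE p q) :
    R.S.anc (lowPt p) (lowPt q) := by
  cases p with
  | inl a =>
    cases q with
    | inl b => exact h
    | inr z => exact h
  | inr y =>
    cases q with
    | inl b => exact RTree.anc_trans (R.S.anc_par y) h
    | inr z => exact h

lemma extLE_inr {p : W ⊕ W} {y : W} (h : R.S.anc (lowPt p) y) :
    R.extLE p (Sum.inr y) := by
  cases p with
  | inl a => exact h
  | inr z => exact h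

lemma extLE_inl {a : W} {q : W ⊕ W} (h : R.S.anc a (lowPt q)) :
    R.extLE (Sum.inl a) q := by
  cases q with
  | inl b => exact h
  | inr z => exact h

lemma mem_sigmaBar_anc {μ : V → W ⊕ W} (hM1 : R.M1 μ) (hM3 : R.M3 μ)
    {a : W} {x : V} (ha : a ∈ R.sigmaBar x) : R.S.anc a (lowPt (μ x)) := by
  obtain ⟨l, ⟨hl, hf⟩, rfl⟩ := ha
  by_cases hlx : l = x
  · subst hlx
    rw [hM1 l hl]
    exact R.S.anc_refl _
  · have hnd : ¬ (R.IsDupHGT l ∧ R.IsDupHGT x) := by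
      rintro ⟨hd, -⟩
      have hleaf := (R.leaf_iff l).1 hl
      rcases hd with hh | hh <;> rw [hleaf] at hh <;> exact absurd hh (by decide)
    have hlt := ((hM3 l x ⟨hf, hlx⟩).2 hnd).1
    rw [hM1 l hl] at hlt
    exact R.extLE_lowPt hlt

lemma sigmaBar_split {u v w : V} (hu : ¬ R.T.IsLeaf u)
    (hchild : ∀ c, R.T.par c = u → c ≠ u → c = v ∨ c = w) :
    ∀ a ∈ R.sigmaBar u, a ∈ R.sigmaBar v ∪ R.sigmaBar w := by
  have aux : ∀ k l, R.T.IsLeaf l → R.T.par^[k] l = u →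
      (∀ i < k, R.T.par^[i] l ∉ R.trans) → R.sig l ∈ R.sigmaBar v ∪ R.sigmaBar w := by
    intro k
    induction k with
    | zero =>
      intro l hl hk _
      have hlu : l = u := hk
      exact absurd (hlu ▸ hl) hu
    | succ k ih =>
      intro l hl hk hpre
      have hcu : R.T.par (R.T.par^[k] l) = u := by
        have hk' := hk
        rw [Function.iterate_succ_apply'] at hk'
        exact hk'
      by_cases hc : R.T.par^[k] l = u
      · exact ih l hl hc (fun i hi => hpre i (hi.trans (Nat.lt_succ_self k)))
      · rcases hchild _ hcu hc with hh | hh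
        · exact Or.inl ⟨l, ⟨hl, k, hh, fun i hi => hpre i (hi.trans (Nat.lt_succ_self k))⟩, rfl⟩
        · exact Or.inr ⟨l, ⟨hl, k, hh, fun i hi => hpre i (hi.trans (Nat.lt_succ_self k))⟩, rfl⟩
  rintro a ⟨l, ⟨hl, k, hk, hpre⟩, rfl⟩
  exact aux k l hl hk hpre

lemma hgt_false {μ : V → W ⊕ W} (hrec : R.IsRecon μ)
    {u v w : V} (hv : R.T.par v = u) (hw : R.T.par w = u)
    (hvu : v ≠ u) (hwu : w ≠ u) (hvtr : v ∈ R.trans) (hwtr : w ∉ R.trans)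
    (htu : R.t u = Event.hgt)
    (h : ¬ R.incomp (μ v) (μ w) ∨
      R.extLT (Sum.inl (R.lca {lowPt (μ v), lowPt (μ w)})) (μ u)) : False := by
  obtain ⟨hM1, hM2i, hM2ii, hM2iii, hM3⟩ := hrec
  obtain ⟨y, hy, hmu⟩ := hM2ii u (Or.inr htu)
  have hinc : R.incomp (μ u) (μ v) := by
    rw [← hv]; exact hM2iii v hvtr
  have hwle : R.extLE (μ w) (μ u) := by
    have h3 := hM3 w u (R.sfanc_child hw hwu hwtr)
    by_cases hd : R.IsDupHGT w ∧ R.IsDupHGT u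
    · exact h3.1 hd
    · exact (h3.2 hd).1
  have hwy : R.S.anc (lowPt (μ w)) y := by
    have hh := R.extLE_lowPt hwle
    rwa [hmu] at hh
  rcases h with h1 | h2
  · have h1' : R.extLE (μ v) (μ w) ∨ R.extLE (μ w) (μ v) := by
      by_contra hc
      push_neg at hc
      exact h1 ⟨hc.1, hc.2⟩
    rcases h1' with hvw | hwv
    · have hvy : R.S.anc (lowPt (μ v)) y := RTree.anc_trans (R.extLE_lowPt hvw) hwy
      apply hinc.2
      rw [hmu]
      exact R.extLE_inr hvy
    · have h3 : R.S.anc (lowPt (μ w)) (lowPt (μ v)) := R.extLE_lowPt hwv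
      rcases RTree.anc_total h3 hwy with hvy | hyv
      · apply hinc.2
        rw [hmu]
        exact R.extLE_inr hvy
      · cases hmv : μ v with
        | inl b =>
          rw [hmv] at hyv
          obtain ⟨k, hk⟩ := hyv
          cases k with
          | zero =>
            apply hinc.2
            rw [hmu, hmv]
            have hyb : y = b := hk
            subst hyb
            exact R.S.anc_refl y
          | succ k =>
            apply hinc.1
            rw [hmu, hmv]
            show R.S.anc (R.S.par y) b
            exact ⟨k, by rw [← Function.iterate_succ_apply]; exact hk⟩
        | inr z =>
          apply hinc.1
          rw [hmu, hmv]
          show R.S.anc y z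
          rw [hmv] at hyv
          exact hyv
  · have hml : R.S.anc (lowPt (μ v)) (R.lca {lowPt (μ v), lowPt (μ w)}) :=
      (R.lca_spec _ ⟨lowPt (μ v), Set.mem_insert _ _⟩).1 _ (Set.mem_insert _ _)
    have h4 := h2.1
    rw [hmu] at h4
    have hvy : R.S.anc (lowPt (μ v)) y := RTree.anc_trans hml h4
    apply hinc.2
    rw [hmu]
    exact R.extLE_inr hvy

end ReconSetup

end AuxLemmas

/-- for a reconciliation map on a binary gene tree and an interior
vertex `u` with children `v, w`: if `μ(v)` and `μ(w)` are comparable in `S`, or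
`μ(u) ≻_S lca_S(μ(v), μ(w))`, then `u` is a duplication vertex. -/
theorem stmt6 {V W : Type*} [Fintype V] (R : ReconSetup V W) (μ : V → W ⊕ W)
    (hrec : R.IsRecon μ) (hO1 : R.O1) (hO2 : R.O2)
    (hS1 : R.Sigma1) (hS2 : R.Sigma2) (hbin : R.BinaryT)
    (u v w : V) (hu : ¬ R.T.IsLeaf u) (hvw : v ≠ w)
    (hv : R.T.par v = u) (hw : R.T.par w = u) (hvu : v ≠ u) (hwu : w ≠ u)
    (h : ¬ R.incomp (μ v) (μ w) ∨
      R.extLT (Sum.inl (R.lca {lowPt (μ v), lowPt (μ w)})) (μ u)) :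
    R.t u = Event.dup := by
  obtain ⟨hM1, hM2i, hM2ii, hM2iii, hM3⟩ := id hrec
  obtain ⟨a, b, hab, hiff⟩ := hbin u hu
  have hchild : ∀ c, R.T.par c = u → c ≠ u → c = v ∨ c = w := by
    intro c h1 h2
    have hc := (hiff c).1 ⟨h1, h2⟩
    have hv' := (hiff v).1 ⟨hv, hvu⟩
    have hw' := (hiff w).1 ⟨hw, hwu⟩
    rcases hv' with rfl | rfl <;> rcases hw' with rfl | rfl <;> tauto
  have htl : R.t u ≠ Event.leaf := fun hh => hu ((R.leaf_iff u).2 hh)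
  cases htu : R.t u with
  | leaf => exact absurd htu htl
  | dup => rfl
  | hgt =>
    exfalso
    obtain ⟨⟨c, hc1, hc2⟩, ⟨c', hc'1, hc'u, hc'2⟩⟩ := hO2 u htu
    have hcu : c ≠ u := by
      intro hcu
      have hcr := R.trans_ne_root c hc2
      exact R.T.par_ne c hcr (by rw [hc1, hcu])
    have hcc' : c ≠ c' := fun hh => hc'2 (hh ▸ hc2)
    rcases hchild c hc1 hcu with hcv | hcw
    · rcases hchild c' hc'1 hc'u with hc'v | hc'w
      · exact hcc' (hcv.trans hc'v.symm)
      · rw [hcv] at hc2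
        rw [hc'w] at hc'2
        exact R.hgt_false hrec hv hw hvu hwu hc2 hc'2 htu h
    · rcases hchild c' hc'1 hc'u with hc'v | hc'w
      · rw [hcw] at hc2
        rw [hc'v] at hc'2
        refine R.hgt_false hrec hw hv hwu hvu hc2 hc'2 htu ?_
        rcases h with h1 | h2
        · left
          intro hic
          exact h1 ⟨hic.2, hic.1⟩
        · right
          rw [Set.pair_comm (lowPt (μ w)) (lowPt (μ v))]
          exact h2
      · exact hcc' (hcw.trans hc'w.symm)
  | spec =>
    exfalso
    have hvt : v ∉ R.trans := by
      intro htr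
      have h2 := R.trans_hgt v htr
      rw [hv, htu] at h2
      exact Event.noConfusion h2
    have hwt : w ∉ R.trans := by
      intro htr
      have h2 := R.trans_hgt w htr
      rw [hw, htu] at h2
      exact Event.noConfusion h2
    have hnd : ¬ R.IsDupHGT u := by
      rintro (hh | hh) <;> rw [htu] at hh <;> exact Event.noConfusion hh
    have hmu := hM2i u htu
    have hsplit := R.sigmaBar_split hu hchild
    have hvanc : ∀ a' ∈ R.sigmaBar v, R.S.anc a' (lowPt (μ v)) :=
      fun a' ha' => R.mem_sigmaBar_anc hM1 hM3 ha'
    have hwanc : ∀ a' ∈ R.sigmaBar w, R.S.anc a' (lowPt (μ w)) :=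
      fun a' ha' => R.mem_sigmaBar_anc hM1 hM3 ha'
    have hltv := (hM3 v u (R.sfanc_child hv hvu hvt)).2 (fun hh => hnd hh.2)
    have hltw := (hM3 w u (R.sfanc_child hw hwu hwt)).2 (fun hh => hnd hh.2)
    have hne := R.sigmaBar_nonempty hO1 hO2 u
    rcases h with h1 | h2
    · have h1' : R.extLE (μ v) (μ w) ∨ R.extLE (μ w) (μ v) := by
        by_contra hc
        push_neg at hc
        exact h1 ⟨hc.1, hc.2⟩
      rcases h1' with hvw | hwv
      · have hall : ∀ a' ∈ R.sigmaBar u, R.S.anc a' (lowPt (μ w)) := by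
          intro a' ha'
          rcases hsplit a' ha' with hh | hh
          · exact RTree.anc_trans (hvanc a' hh) (R.extLE_lowPt hvw)
          · exact hwanc a' hh
        have hlca := (R.lca_spec _ hne).2 _ hall
        apply hltw.2
        rw [hmu]
        exact R.extLE_inl hlca
      · have hall : ∀ a' ∈ R.sigmaBar u, R.S.anc a' (lowPt (μ v)) := by
          intro a' ha'
          rcases hsplit a' ha' with hh | hh
          · exact hvanc a' hh
          · exact RTree.anc_trans (hwanc a' hh) (R.extLE_lowPt hwv)
        have hlca := (R.lca_spec _ hne).2 _ hall
        apply hltv.2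
        rw [hmu]
        exact R.extLE_inl hlca
    · have hpair := R.lca_spec {lowPt (μ v), lowPt (μ w)} ⟨_, Set.mem_insert _ _⟩
      have hall : ∀ a' ∈ R.sigmaBar u,
          R.S.anc a' (R.lca {lowPt (μ v), lowPt (μ w)}) := by
        intro a' ha'
        rcases hsplit a' ha' with hh | hh
        · exact RTree.anc_trans (hvanc a' hh) (hpair.1 _ (Set.mem_insert _ _))
        · exact RTree.anc_trans (hwanc a' hh) (hpair.1 _ (Set.mem_insert_of_mem _ rfl))
      have hlca := (R.lca_spec _ hne).2 _ hall
      apply h2.2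
      rw [hmu]
      exact hlca
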